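/- arXiv:2002.00282 — 7 statements merged into one kernel-verified Lean document; each statement's English description precedes it below -/
import Mathlib

section
/- Let R be a commutative ring, let a, b ∈ R, and let θ denote the image of t in the quotient ring R[t]/(t² + at + b). Then for all r, i ∈ R and every n ∈ ℕ, one has (r + iθ)ⁿ = ( rⁿ + Σ_{j=2}^{n} C(n,j) · Σ_{u,v ∈ ℕ, u+2v = j−2} C(u+v,u) (−a)^u (−b)^{v+1} i^j r^{n−j} ) + ( Σ_{j=1}^{n} C(n,j) · Σ_{u,v ∈ ℕ, u+2v = j−1} C(u+v,u) (−a)^u (−b)^v i^j r^{n−j} ) θ. -/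
open Polynomial Finset

private def Aset (k : ℕ) : Finset (ℕ × ℕ) :=
  (range (k+1) ×ˢ range (k+1)).filter (fun uv => uv.1 + 2 * uv.2 = k)

private lemma mem_Aset {k : ℕ} {uv : ℕ × ℕ} : uv ∈ Aset k ↔ uv.1 + 2 * uv.2 = k := by
  simp only [Aset, mem_filter, mem_product, mem_range]
  omega

private def Gs {R : Type*} [CommRing R] (x y : R) (k : ℕ) : R :=
  ∑ uv ∈ Aset k, ((uv.1 + uv.2).choose uv.1 : R) * x ^ uv.1 * y ^ uv.2

private lemma Aset_zero : Aset 0 = {(0,0)} := by decide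
private lemma Aset_one : Aset 1 = {(1,0)} := by decide

private lemma Gs_zero {R : Type*} [CommRing R] (x y : R) : Gs x y 0 = 1 := by
  simp [Gs, Aset_zero]

private lemma Gs_one {R : Type*} [CommRing R] (x y : R) : Gs x y 1 = x := by
  simp [Gs, Aset_one]

private lemma choose_split {u v : ℕ} (h : 0 < u + v) :
    (u + v).choose u = (if 1 ≤ u then (u + v - 1).choose (u-1) else 0)
      + (if 1 ≤ v then (u + v - 1).choose u else 0) := by
  rcases u with _ | u <;> rcases v with _ | v
  · omega
  · simp
  · simp
  · simp only [if_pos (by omega : 1 ≤ u + 1), if_pos (by omega : 1 ≤ v + 1),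
      Nat.add_sub_cancel]
    have h1 : u + 1 + (v + 1) = (u + v + 1) + 1 := by omega
    rw [h1, show u + v + 1 + 1 - 1 = u + v + 1 from rfl, Nat.choose_succ_succ]

private lemma Gs_rec {R : Type*} [CommRing R] (x y : R) (k : ℕ) :
    Gs x y (k+2) = x * Gs x y (k+1) + y * Gs x y k := by
  have h1 : x * Gs x y (k+1)
      = ∑ uv ∈ (Aset (k+2)).filter (fun uv => 1 ≤ uv.1),
          ((uv.1 + uv.2 - 1).choose (uv.1 - 1) : R) * x ^ uv.1 * y ^ uv.2 := by
    rw [Gs, mul_sum]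
    refine Finset.sum_nbij' (fun uv => (uv.1 + 1, uv.2)) (fun uv => (uv.1 - 1, uv.2))
      ?_ ?_ ?_ ?_ ?_
    · rintro ⟨p, q⟩ hu
      rw [mem_Aset] at hu
      simp only [mem_filter, mem_Aset]
      omega
    · rintro ⟨p, q⟩ hu
      simp only [mem_filter, mem_Aset] at hu
      rw [mem_Aset]
      dsimp only
      omega
    · rintro ⟨p, q⟩ _; rfl
    · rintro ⟨p, q⟩ hu
      simp only [mem_filter] at hu
      dsimp only
      ext <;> dsimp <;> omega
    · rintro ⟨p, q⟩ _
      dsimp only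
      have e1 : p + 1 + q - 1 = p + q := by omega
      have e2 : p + 1 - 1 = p := by omega
      rw [e1, e2]
      ring
  have h2 : y * Gs x y k
      = ∑ uv ∈ (Aset (k+2)).filter (fun uv => 1 ≤ uv.2),
          ((uv.1 + uv.2 - 1).choose uv.1 : R) * x ^ uv.1 * y ^ uv.2 := by
    rw [Gs, mul_sum]
    refine Finset.sum_nbij' (fun uv => (uv.1, uv.2 + 1)) (fun uv => (uv.1, uv.2 - 1))
      ?_ ?_ ?_ ?_ ?_
    · rintro ⟨p, q⟩ hu
      rw [mem_Aset] at hu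
      simp only [mem_filter, mem_Aset]
      omega
    · rintro ⟨p, q⟩ hu
      simp only [mem_filter, mem_Aset] at hu
      rw [mem_Aset]
      dsimp only
      omega
    · rintro ⟨p, q⟩ _; rfl
    · rintro ⟨p, q⟩ hu
      simp only [mem_filter] at hu
      dsimp only
      ext <;> dsimp <;> omega
    · rintro ⟨p, q⟩ _
      dsimp only
      have e1 : p + (q + 1) - 1 = p + q := by omega
      rw [e1]
      ring
  rw [h1, h2, sum_filter, sum_filter, ← Finset.sum_add_distrib, Gs]
  refine Finset.sum_congr rfl ?_
  intro uv hu
  rw [mem_Aset] at hu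
  have hpos : 0 < uv.1 + uv.2 := by omega
  rw [choose_split hpos]
  push_cast
  by_cases hc1 : 1 ≤ uv.1 <;> by_cases hc2 : 1 ≤ uv.2 <;>
    simp only [hc1, hc2, if_true, if_false] <;> ring

/-- the coefficient sequence: `θ^j = (cdseq a b j).1 + (cdseq a b j).2 * θ`. -/
private def cdseq {R : Type*} [CommRing R] (a b : R) : ℕ → R × R
  | 0 => (1, 0)
  | j + 1 => (-b * (cdseq a b j).2, (cdseq a b j).1 - a * (cdseq a b j).2)

private lemma cdseq_snd {R : Type*} [CommRing R] (a b : R) :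
    ∀ j, (cdseq a b (j+1)).2 = Gs (-a) (-b) j := by
  have key : ∀ j, (cdseq a b (j+1)).2 = Gs (-a) (-b) j
      ∧ (cdseq a b (j+2)).2 = Gs (-a) (-b) (j+1) := by
    intro j
    induction j with
    | zero =>
      constructor
      · simp [cdseq, Gs_zero]
      · simp [cdseq, Gs_one]
    | succ m ih =>
      refine ⟨ih.2, ?_⟩
      show (cdseq a b (m+2)).1 - a * (cdseq a b (m+2)).2 = _
      have : (cdseq a b (m+2)).1 = -b * (cdseq a b (m+1)).2 := rfl
      rw [this, ih.1, ih.2, Gs_rec]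
      ring
  exact fun j => (key j).1

private lemma cdseq_fst {R : Type*} [CommRing R] (a b : R) (j : ℕ) :
    (cdseq a b (j+2)).1 = -b * Gs (-a) (-b) j := by
  show -b * (cdseq a b (j+1)).2 = _
  rw [cdseq_snd]

private lemma root_sq {R : Type*} [CommRing R] (a b : R) :
    (AdjoinRoot.root (X ^ 2 + C a * X + C b)) ^ 2
      = algebraMap R _ (-a) * AdjoinRoot.root (X ^ 2 + C a * X + C b)
        + algebraMap R _ (-b) := by
  have h0 : (AdjoinRoot.mk (X ^ 2 + C a * X + C b)) (X ^ 2 + C a * X + C b) = 0 :=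
    AdjoinRoot.mk_self
  simp only [map_add, map_mul, map_pow, map_neg, AdjoinRoot.mk_X, AdjoinRoot.mk_C,
    AdjoinRoot.algebraMap_eq] at h0 ⊢
  linear_combination h0

private lemma root_pow {R : Type*} [CommRing R] (a b : R) (j : ℕ) :
    (AdjoinRoot.root (X ^ 2 + C a * X + C b)) ^ j
      = algebraMap R _ ((cdseq a b j).1)
        + algebraMap R _ ((cdseq a b j).2) * AdjoinRoot.root (X ^ 2 + C a * X + C b) := by
  induction j with
  | zero => simp [cdseq]
  | succ m ih =>
    rw [pow_succ (AdjoinRoot.root (X ^ 2 + C a * X + C b)) m, ih]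
    have hsq := root_sq a b
    show _ = algebraMap R _ (-b * (cdseq a b m).2)
        + algebraMap R _ ((cdseq a b m).1 - a * (cdseq a b m).2)
          * AdjoinRoot.root (X ^ 2 + C a * X + C b)
    simp only [map_mul, map_sub, map_neg] at hsq ⊢
    linear_combination (algebraMap R (AdjoinRoot (X ^ 2 + C a * X + C b)) (cdseq a b m).2) * hsq

/-- Powers of `r + i·θ` in `R[t]/(t² + a t + b)`, where `θ` is the image
of `t` (realized as `AdjoinRoot (X² + a X + b)`). The inner sums range over all pairs
`(u, v) ∈ ℕ²` with `u + 2v = j - 2` (resp. `u + 2v = j - 1`), encoded as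
`u + 2v + 2 = j` (resp. `u + 2v + 1 = j`); since `u + 2v < j ≤ n`, filtering the pairs in
`range (n+1) ×ˢ range (n+1)` captures exactly these pairs. -/
theorem powers_in_quadratic_extension {R : Type*} [CommRing R] (a b r i : R) (n : ℕ) :
    (algebraMap R (AdjoinRoot (X ^ 2 + C a * X + C b)) r
        + algebraMap R (AdjoinRoot (X ^ 2 + C a * X + C b)) i
          * AdjoinRoot.root (X ^ 2 + C a * X + C b)) ^ n
      = algebraMap R (AdjoinRoot (X ^ 2 + C a * X + C b))
          (r ^ n + ∑ j ∈ Icc 2 n, (n.choose j : R) *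
            (∑ uv ∈ (range (n + 1) ×ˢ range (n + 1)).filter
                (fun uv => uv.1 + 2 * uv.2 + 2 = j),
              ((uv.1 + uv.2).choose uv.1 : R) * (-a) ^ uv.1 * (-b) ^ (uv.2 + 1))
            * i ^ j * r ^ (n - j))
        + algebraMap R (AdjoinRoot (X ^ 2 + C a * X + C b))
          (∑ j ∈ Icc 1 n, (n.choose j : R) *
            (∑ uv ∈ (range (n + 1) ×ˢ range (n + 1)).filter
                (fun uv => uv.1 + 2 * uv.2 + 1 = j),
              ((uv.1 + uv.2).choose uv.1 : R) * (-a) ^ uv.1 * (-b) ^ uv.2)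
            * i ^ j * r ^ (n - j))
          * AdjoinRoot.root (X ^ 2 + C a * X + C b) := by
  set θ := AdjoinRoot.root (X ^ 2 + C a * X + C b) with hθ
  set alg := algebraMap R (AdjoinRoot (X ^ 2 + C a * X + C b)) with halg
  -- inner sum conversions
  have inner2 : ∀ j ∈ Icc 2 n,
      (∑ uv ∈ (range (n + 1) ×ˢ range (n + 1)).filter
          (fun uv => uv.1 + 2 * uv.2 + 2 = j),
        ((uv.1 + uv.2).choose uv.1 : R) * (-a) ^ uv.1 * (-b) ^ (uv.2 + 1))
      = -b * Gs (-a) (-b) (j - 2) := by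
    intro j hj
    rw [mem_Icc] at hj
    have hset : (range (n + 1) ×ˢ range (n + 1)).filter
        (fun uv => uv.1 + 2 * uv.2 + 2 = j) = Aset (j - 2) := by
      ext uv
      simp only [mem_filter, mem_product, mem_range, mem_Aset]
      omega
    rw [hset, Gs, mul_sum]
    refine Finset.sum_congr rfl fun uv _ => ?_
    rw [pow_succ]
    ring
  have inner1 : ∀ j ∈ Icc 1 n,
      (∑ uv ∈ (range (n + 1) ×ˢ range (n + 1)).filter
          (fun uv => uv.1 + 2 * uv.2 + 1 = j),
        ((uv.1 + uv.2).choose uv.1 : R) * (-a) ^ uv.1 * (-b) ^ uv.2)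
      = Gs (-a) (-b) (j - 1) := by
    intro j hj
    rw [mem_Icc] at hj
    have hset : (range (n + 1) ×ˢ range (n + 1)).filter
        (fun uv => uv.1 + 2 * uv.2 + 1 = j) = Aset (j - 1) := by
      ext uv
      simp only [mem_filter, mem_product, mem_range, mem_Aset]
      omega
    rw [hset, Gs]
  -- binomial expansion
  rw [add_comm (alg r), add_pow]
  have term_eq : ∀ k, (alg i * θ) ^ k * alg r ^ (n - k) * (n.choose k : AdjoinRoot (X ^ 2 + C a * X + C b))
      = alg ((n.choose k : R) * i ^ k * r ^ (n - k) * (cdseq a b k).1)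
        + alg ((n.choose k : R) * i ^ k * r ^ (n - k) * (cdseq a b k).2) * θ := by
    intro k
    rw [mul_pow, root_pow a b k]
    simp only [map_mul, map_pow, map_natCast]
    push_cast
    ring
  rw [Finset.sum_congr rfl (fun k _ => term_eq k), Finset.sum_add_distrib, ← map_sum,
    ← Finset.sum_mul, ← map_sum]
  have range_split : range (n + 1) = insert 0 (Icc 1 n) := by
    ext k; simp only [mem_range, mem_insert, mem_Icc]; omega
  have h0notmem : (0 : ℕ) ∉ Icc 1 n := by simp
  -- the c-part
  have hc : ∑ k ∈ range (n + 1), (n.choose k : R) * i ^ k * r ^ (n - k) * (cdseq a b k).1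
      = r ^ n + ∑ j ∈ Icc 2 n, (n.choose j : R) *
          (∑ uv ∈ (range (n + 1) ×ˢ range (n + 1)).filter
              (fun uv => uv.1 + 2 * uv.2 + 2 = j),
            ((uv.1 + uv.2).choose uv.1 : R) * (-a) ^ uv.1 * (-b) ^ (uv.2 + 1))
          * i ^ j * r ^ (n - j) := by
    conv_lhs => rw [range_split]
    rw [Finset.sum_insert h0notmem]
    have h00 : (n.choose 0 : R) * i ^ 0 * r ^ (n - 0) * (cdseq a b 0).1 = r ^ n := by
      simp [cdseq]
    rw [h00]
    congr 1
    have hsub : Icc 2 n ⊆ Icc 1 n := by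
      intro k hk; rw [mem_Icc] at *; omega
    rw [← Finset.sum_subset hsub]
    · refine Finset.sum_congr rfl fun j hj => ?_
      rw [mem_Icc] at hj
      obtain ⟨m, rfl⟩ : ∃ m, j = m + 2 := ⟨j - 2, by omega⟩
      rw [inner2 (m+2) (by rw [mem_Icc]; omega), cdseq_fst]
      simp only [Nat.add_sub_cancel]
      ring
    · intro k hk hk2
      rw [mem_Icc] at hk; rw [mem_Icc] at hk2
      obtain rfl : k = 1 := by omega
      have : (cdseq a b 1).1 = -b * (cdseq a b 0).2 := rfl
      rw [this]
      simp [cdseq]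
  -- the d-part
  have hd : ∑ k ∈ range (n + 1), (n.choose k : R) * i ^ k * r ^ (n - k) * (cdseq a b k).2
      = ∑ j ∈ Icc 1 n, (n.choose j : R) *
          (∑ uv ∈ (range (n + 1) ×ˢ range (n + 1)).filter
              (fun uv => uv.1 + 2 * uv.2 + 1 = j),
            ((uv.1 + uv.2).choose uv.1 : R) * (-a) ^ uv.1 * (-b) ^ uv.2)
          * i ^ j * r ^ (n - j) := by
    conv_lhs => rw [range_split]
    rw [Finset.sum_insert h0notmem]
    have h00 : (n.choose 0 : R) * i ^ 0 * r ^ (n - 0) * (cdseq a b 0).2 = 0 := by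
      simp [cdseq]
    rw [h00, zero_add]
    refine Finset.sum_congr rfl fun j hj => ?_
    rw [mem_Icc] at hj
    obtain ⟨m, rfl⟩ : ∃ m, j = m + 1 := ⟨j - 1, by omega⟩
    rw [inner1 (m+1) (by rw [mem_Icc]; omega), cdseq_snd]
    simp only [Nat.add_sub_cancel]
    ring
  rw [hc, hd]
end

section
/- Let R be a commutative ring of prime characteristic p, let a, b ∈ R, and let θ denote the image of t in R[t]/(t² + at + b). Then for every q = p^e with e ∈ ℕ and all r, i ∈ R, one has (r + iθ)^q = (r^q + A_q i^q) + (B_q i^q) θ, where A_q = Σ_{u,v ∈ ℕ, u+2v = q−2} C(u+v,u) (−a)^u (−b)^{v+1} and B_q = Σ_{u,v ∈ ℕ, u+2v = q−1} C(u+v,u) (−a)^u (−b)^v are elements of R. -/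
open Polynomial Finset

section Aux

variable {R : Type*} [CommRing R]

private def Fsum (a b : R) (n : ℕ) : R :=
  ∑ uv ∈ (range (n + 1) ×ˢ range (n + 1)).filter (fun uv => uv.1 + 2 * uv.2 = n),
    ((uv.1 + uv.2).choose uv.1 : R) * (-a) ^ uv.1 * (-b) ^ uv.2

private lemma Fsum_range (a b : R) {n N : ℕ} (hN : n ≤ N) :
    ∑ uv ∈ (range (N + 1) ×ˢ range (N + 1)).filter (fun uv => uv.1 + 2 * uv.2 = n),
      ((uv.1 + uv.2).choose uv.1 : R) * (-a) ^ uv.1 * (-b) ^ uv.2 = Fsum a b n := by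
  unfold Fsum
  congr 1
  ext ⟨u, v⟩
  simp only [mem_filter, mem_product, mem_range]
  omega

private lemma Fsum_zero (a b : R) : Fsum a b 0 = 1 := by
  simp [Fsum, Finset.sum_filter, Finset.sum_product]

private lemma Fsum_one (a b : R) : Fsum a b 1 = -a := by
  simp [Fsum, Finset.sum_filter, Finset.sum_product, Finset.sum_range_succ]

private lemma Fsum_rec (a b : R) (n : ℕ) :
    Fsum a b (n + 2) = -a * Fsum a b (n + 1) + -b * Fsum a b n := by
  classical
  set S : Finset (ℕ × ℕ) :=
    (range (n + 2 + 1) ×ˢ range (n + 2 + 1)).filter (fun uv => uv.1 + 2 * uv.2 = n + 2)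
    with hS
  have key : ∀ uv ∈ S, ((uv.1 + uv.2).choose uv.1 : R) * (-a) ^ uv.1 * (-b) ^ uv.2
      = (if 1 ≤ uv.1 then
          ((uv.1 - 1 + uv.2).choose (uv.1 - 1) : R) * (-a) ^ uv.1 * (-b) ^ uv.2 else 0)
        + (if 1 ≤ uv.2 then
          ((uv.1 + uv.2 - 1).choose uv.1 : R) * (-a) ^ uv.1 * (-b) ^ uv.2 else 0) := by
    rintro ⟨u, v⟩ huv
    simp only [hS, mem_filter, mem_product, mem_range] at huv
    have hcond : u + 2 * v = n + 2 := huv.2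
    match u, v with
    | 0, 0 => omega
    | 0, v + 1 => simp
    | u + 1, 0 => simp
    | u + 1, v + 1 =>
      simp only [if_pos (by omega : 1 ≤ u + 1), if_pos (by omega : 1 ≤ v + 1),
        Nat.add_sub_cancel]
      have : (u + 1 + (v + 1)).choose (u + 1)
          = (u + (v + 1)).choose u + (u + (v + 1)).choose (u + 1) := by
        rw [show u + 1 + (v + 1) = (u + (v + 1)) + 1 by omega]
        exact Nat.choose_succ_succ' _ _
      rw [show u + 1 + (v + 1) - 1 = u + (v + 1) by omega, this]
      push_cast
      ring
  have hsplit : Fsum a b (n + 2)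
      = (∑ uv ∈ S.filter (fun uv => 1 ≤ uv.1),
          ((uv.1 - 1 + uv.2).choose (uv.1 - 1) : R) * (-a) ^ uv.1 * (-b) ^ uv.2)
        + ∑ uv ∈ S.filter (fun uv => 1 ≤ uv.2),
          ((uv.1 + uv.2 - 1).choose uv.1 : R) * (-a) ^ uv.1 * (-b) ^ uv.2 := by
    rw [Fsum, ← hS, Finset.sum_congr rfl key, Finset.sum_add_distrib,
      ← Finset.sum_filter, ← Finset.sum_filter]
  rw [hsplit]
  congr 1
  · rw [Fsum, Finset.mul_sum]
    refine (Finset.sum_nbij' (fun uv => (uv.1 + 1, uv.2)) (fun uv => (uv.1 - 1, uv.2))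
      ?_ ?_ ?_ ?_ ?_).symm
    · intro uv huv
      simp only [hS, mem_filter, mem_product, mem_range] at huv ⊢
      omega
    · intro uv huv
      simp only [hS, mem_filter, mem_product, mem_range] at huv ⊢
      omega
    · intro uv _; simp
    · intro uv huv
      simp only [hS, mem_filter, mem_product, mem_range] at huv
      ext
      · simp; omega
      · simp
    · rintro ⟨u, v⟩ _
      simp only [Nat.add_sub_cancel]
      rw [pow_succ]
      ring
  · rw [Fsum, Finset.mul_sum]

    refine (Finset.sum_nbij' (fun uv => (uv.1, uv.2 + 1)) (fun uv => (uv.1, uv.2 - 1))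
      ?_ ?_ ?_ ?_ ?_).symm
    · intro uv huv
      simp only [hS, mem_filter, mem_product, mem_range] at huv ⊢
      omega
    · intro uv huv
      simp only [hS, mem_filter, mem_product, mem_range] at huv ⊢
      omega
    · intro uv _; simp
    · intro uv huv
      simp only [hS, mem_filter, mem_product, mem_range] at huv
      ext
      · simp
      · simp; omega
    · rintro ⟨u, v⟩ _
      simp only [show ∀ u v : ℕ, u + (v + 1) - 1 = u + v from fun u v => by omega]
      rw [pow_succ]
      ring

end Aux

/-- Let `R` be a commutative ring of prime characteristic `p`, `a b ∈ R`
and let `θ` be the image of `t` in `R[t]/(t² + a t + b)`. For `q = p ^ e`,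
`(r + iθ) ^ q = (r ^ q + A_q i ^ q) + (B_q i ^ q) θ`, where
`A_q = ∑_{u+2v=q-2} C(u+v,u) (-a)ᵘ (-b)^{v+1}` and
`B_q = ∑_{u+2v=q-1} C(u+v,u) (-a)ᵘ (-b)ᵛ`. The conditions `u + 2v = q - 2` and
`u + 2v = q - 1` are encoded as `u + 2v + 2 = q` and `u + 2v + 1 = q`; all such pairs lie
in `range (q+1) ×ˢ range (q+1)`. -/
theorem frobenius_power_in_quadratic_extension {R : Type*} [CommRing R] (p : ℕ)
    (hp : p.Prime) [CharP R p] (a b r i : R) (e : ℕ) (q : ℕ) (hq : q = p ^ e) :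
    (algebraMap R (AdjoinRoot (X ^ 2 + C a * X + C b)) r
        + algebraMap R (AdjoinRoot (X ^ 2 + C a * X + C b)) i
          * AdjoinRoot.root (X ^ 2 + C a * X + C b)) ^ q
      = algebraMap R (AdjoinRoot (X ^ 2 + C a * X + C b))
          (r ^ q
            + (∑ uv ∈ (range (q + 1) ×ˢ range (q + 1)).filter
                  (fun uv => uv.1 + 2 * uv.2 + 2 = q),
                ((uv.1 + uv.2).choose uv.1 : R) * (-a) ^ uv.1 * (-b) ^ (uv.2 + 1))
              * i ^ q)
        + algebraMap R (AdjoinRoot (X ^ 2 + C a * X + C b))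
            ((∑ uv ∈ (range (q + 1) ×ˢ range (q + 1)).filter
                  (fun uv => uv.1 + 2 * uv.2 + 1 = q),
                ((uv.1 + uv.2).choose uv.1 : R) * (-a) ^ uv.1 * (-b) ^ uv.2)
              * i ^ q)
          * AdjoinRoot.root (X ^ 2 + C a * X + C b) := by
  haveI : Fact p.Prime := ⟨hp⟩
  haveI : Nontrivial R := CharP.nontrivial_of_char_ne_one hp.ne_one
  set f : R[X] := X ^ 2 + C a * X + C b with hf
  have hdlin : (C a * X + C b : R[X]).degree < ((2 : ℕ) : WithBot ℕ) :=
    lt_of_le_of_lt Polynomial.degree_linear_le (by norm_num)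
  have hdeg : f.degree = 2 := by
    rw [hf, add_assoc, Polynomial.degree_add_eq_left_of_degree_lt
      (by rwa [Polynomial.degree_X_pow]), Polynomial.degree_X_pow]
    norm_num
  have hmonic : f.Monic := by
    rw [hf, add_assoc]
    exact Polynomial.monic_X_pow_add hdlin
  have hinj : Function.Injective (algebraMap R (AdjoinRoot f)) := by
    intro x y hxy
    rw [AdjoinRoot.algebraMap_eq] at hxy
    have h2 : AdjoinRoot.mk f (C x) = AdjoinRoot.mk f (C y) := hxy
    have h3 := congrArg (AdjoinRoot.modByMonicHom hmonic) h2
    rw [AdjoinRoot.modByMonicHom_mk, AdjoinRoot.modByMonicHom_mk,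
      (Polynomial.modByMonic_eq_self_iff hmonic).2
        (lt_of_le_of_lt Polynomial.degree_C_le (by rw [hdeg]; norm_num)),
      (Polynomial.modByMonic_eq_self_iff hmonic).2
        (lt_of_le_of_lt Polynomial.degree_C_le (by rw [hdeg]; norm_num))] at h3
    exact Polynomial.C_injective h3
  haveI : CharP (AdjoinRoot f) p := charP_of_injective_algebraMap hinj p
  have hroot : (AdjoinRoot.root f) ^ 2 + algebraMap R (AdjoinRoot f) a * AdjoinRoot.root f
      + algebraMap R (AdjoinRoot f) b = 0 := by
    have h := AdjoinRoot.eval₂_root f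
    rw [hf] at h
    simpa [eval₂_add, eval₂_mul, eval₂_pow, eval₂_X, eval₂_C,
      AdjoinRoot.algebraMap_eq] using h
  have hpow : ∀ m : ℕ, (AdjoinRoot.root f) ^ (m + 2)
      = algebraMap R (AdjoinRoot f) (-b * Fsum a b m)
        + algebraMap R (AdjoinRoot f) (Fsum a b (m + 1)) * AdjoinRoot.root f := by
    intro m
    induction m with
    | zero =>
      simp only [zero_add, Fsum_zero, Fsum_one, mul_one, map_neg]
      linear_combination hroot
    | succ k ih =>
      rw [show k + 1 + 2 = (k + 2) + 1 by ring, pow_succ, ih, Fsum_rec]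
      simp only [map_add, map_mul, map_neg]
      linear_combination (algebraMap R (AdjoinRoot f) (Fsum a b (k + 1))) * hroot
  have hfrob : (algebraMap R (AdjoinRoot f) r + algebraMap R (AdjoinRoot f) i
        * AdjoinRoot.root f) ^ q
      = algebraMap R (AdjoinRoot f) (r ^ q)
        + algebraMap R (AdjoinRoot f) (i ^ q) * (AdjoinRoot.root f) ^ q := by
    subst hq
    rw [add_pow_char_pow, mul_pow, map_pow, map_pow]
  have hq1 : 1 ≤ q := hq ▸ Nat.one_le_pow e p hp.pos
  obtain ⟨m, rfl⟩ : ∃ m, q = m + 1 := ⟨q - 1, by omega⟩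
  have hB : (∑ uv ∈ (range (m + 1 + 1) ×ˢ range (m + 1 + 1)).filter
        (fun uv => uv.1 + 2 * uv.2 + 1 = m + 1),
      ((uv.1 + uv.2).choose uv.1 : R) * (-a) ^ uv.1 * (-b) ^ uv.2) = Fsum a b m := by
    rw [show ((range (m + 1 + 1) ×ˢ range (m + 1 + 1)).filter
          (fun uv => uv.1 + 2 * uv.2 + 1 = m + 1))
        = ((range (m + 1 + 1) ×ˢ range (m + 1 + 1)).filter
          (fun uv => uv.1 + 2 * uv.2 = m)) from by
      ext ⟨u, v⟩
      simp only [mem_filter, mem_product, mem_range]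
      omega]
    exact Fsum_range a b (by omega)
  rcases m with _ | m
  · -- q = 1
    rw [hB, Fsum_zero,
      Finset.filter_false_of_mem (fun uv _ => by omega), Finset.sum_empty]
    simp only [pow_one, zero_mul, add_zero, one_mul, map_add, map_mul]
    ring
  · -- q = m + 2
    have hA : (∑ uv ∈ (range (m + 1 + 1 + 1) ×ˢ range (m + 1 + 1 + 1)).filter
          (fun uv => uv.1 + 2 * uv.2 + 2 = m + 1 + 1),
        ((uv.1 + uv.2).choose uv.1 : R) * (-a) ^ uv.1 * (-b) ^ (uv.2 + 1))
        = -b * Fsum a b m := by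
      rw [show ((range (m + 1 + 1 + 1) ×ˢ range (m + 1 + 1 + 1)).filter
            (fun uv => uv.1 + 2 * uv.2 + 2 = m + 1 + 1))
          = ((range (m + 1 + 1 + 1) ×ˢ range (m + 1 + 1 + 1)).filter
            (fun uv => uv.1 + 2 * uv.2 = m)) from by
        ext ⟨u, v⟩
        simp only [mem_filter, mem_product, mem_range]
        omega]
      rw [← Fsum_range a b (show m ≤ m + 1 + 1 by omega), Finset.mul_sum]
      refine Finset.sum_congr rfl fun uv _ => ?_
      rw [pow_succ]
      ring
    rw [hfrob, show m + 1 + 1 = m + 2 from rfl, hpow m, hA, hB]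
    simp only [map_add, map_mul, map_neg]
    ring
end

section
/- Let R be a noetherian commutative ring of prime characteristic p such that the Frobenius endomorphism F : R → R, F(x) = x^p, is a finite ring homomorphism (R is F-finite), let I be a finitely generated ideal of R, let a, b ∈ R, and let S = {r + iθ : r ∈ R, i ∈ I} be the R-subalgebra of R[t]/(t² + at + b) realizing R(I)_{a,b}. Then the Frobenius endomorphism of S is a finite ring homomorphism, i.e., S is F-finite. -/
set_option synthInstance.maxHeartbeats 400000
set_option maxHeartbeats 1000000


open Polynomial

/-- Let `R` be a noetherian commutative ring of prime characteristic `p`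
whose Frobenius endomorphism is a finite ring homomorphism (`R` is F-finite), let `I` be a
(finitely generated) ideal of `R`, let `a b ∈ R`, and let `S` be the `R`-subalgebra
`{r + iθ : r ∈ R, i ∈ I}` of `R[t]/(t² + a t + b)` realizing `R(I)_{a,b}` (here
`θ = AdjoinRoot.root`). Then the Frobenius endomorphism of `S` is a finite ring
homomorphism, i.e. `S` is F-finite. (The instance `CharP ↥S p` is automatic, since `S` is
a subring of a ring of characteristic `p`.) -/
theorem rees_like_algebra_is_F_finite {R : Type*} [CommRing R] [IsNoetherianRing R]
    (p : ℕ) [Fact p.Prime] [CharP R p] (hfin : (frobenius R p).Finite)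
    (I : Ideal R) (hIfg : I.FG) (a b : R)
    (S : Subalgebra R (AdjoinRoot (X ^ 2 + C a * X + C b)))
    (hS : (S : Set (AdjoinRoot (X ^ 2 + C a * X + C b)))
      = {x | ∃ r : R, ∃ i ∈ I,
          x = algebraMap R (AdjoinRoot (X ^ 2 + C a * X + C b)) r
            + algebraMap R (AdjoinRoot (X ^ 2 + C a * X + C b)) i
              * AdjoinRoot.root (X ^ 2 + C a * X + C b)})
    [CharP ↥S p] :
    (frobenius ↥S p).Finite := by
  set A := AdjoinRoot (X ^ 2 + C a * X + C b) with hA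
  set θ : A := AdjoinRoot.root (X ^ 2 + C a * X + C b) with hθ
  obtain ⟨T, hT⟩ := hIfg
  set G : Set A := insert 1 ((fun i : R => i • θ) '' ↑T) with hG
  -- S as a submodule is spanned by G
  have key : Subalgebra.toSubmodule S = Submodule.span R G := by
    apply le_antisymm
    · intro x hx
      have hx' : x ∈ (S : Set A) := hx
      rw [hS] at hx'
      obtain ⟨r, i, hi, rfl⟩ := hx'
      apply Submodule.add_mem
      · have : algebraMap R A r = r • (1 : A) := by
          rw [Algebra.algebraMap_eq_smul_one]
        rw [this]
        exact Submodule.smul_mem _ r (Submodule.subset_span (Set.mem_insert _ _))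
      · have hiT : i ∈ Submodule.span R (↑T : Set R) := by
          rw [← hT] at hi; exact hi
        have : algebraMap R A i * θ = (LinearMap.toSpanSingleton R A θ) i := by
          simp [Algebra.smul_def, AdjoinRoot.algebraMap_eq]
        rw [this]
        have h1 : (LinearMap.toSpanSingleton R A θ) i ∈
            Submodule.map (LinearMap.toSpanSingleton R A θ)
              (Submodule.span R (↑T : Set R)) :=
          Submodule.mem_map_of_mem hiT
        rw [Submodule.map_span] at h1
        refine Submodule.span_mono ?_ h1
        intro y hy
        obtain ⟨t, ht, rfl⟩ := hy
        exact Set.mem_insert_iff.mpr (Or.inr ⟨t, ht, by simp [Algebra.smul_def, AdjoinRoot.algebraMap_eq]⟩)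
    · rw [Submodule.span_le]
      intro x hx
      rcases hx with rfl | ⟨i, hiT, rfl⟩
      · exact S.one_mem
      · have hi : i ∈ I := by
          rw [← hT]; exact Submodule.subset_span hiT
        show (i • θ) ∈ (S : Set A)
        rw [hS]
        exact ⟨0, i, hi, by simp [Algebra.smul_def]; rfl⟩
  have hGfin : G.Finite :=
    Set.Finite.insert 1 (T.finite_toSet.image _)
  have hfg : (Subalgebra.toSubmodule S).FG := by
    rw [Submodule.fg_def]
    exact ⟨G, hGfin, key.symm⟩
  have hmod : Module.Finite R ↥S :=
    Module.Finite.iff_fg (N := Subalgebra.toSubmodule S) |>.mpr hfg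
  -- convert to RingHom.Finite of the algebra map
  have e : (algebraMap R ↥S).toAlgebra = (inferInstance : Algebra R ↥S) :=
    Algebra.algebra_ext _ _ fun r => rfl
  have h1 : (algebraMap R ↥S).Finite := by
    show @Module.Finite R ↥S _ _ (@Algebra.toModule R ↥S _ _ ((algebraMap R ↥S).toAlgebra))
    rw [e]
    exact hmod
  have hcomp : ((algebraMap R ↥S).comp (frobenius R p)).Finite := h1.comp hfin
  have heq : (frobenius ↥S p).comp (algebraMap R ↥S)
      = (algebraMap R ↥S).comp (frobenius R p) := by
    ext r
    exact congrArg Subtype.val ((algebraMap R ↥S).map_frobenius p r).symm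
  exact RingHom.Finite.of_comp_finite (f := algebraMap R ↥S) (heq ▸ hcomp)
end

section
/- Let (R, 𝔪) be a noetherian local ring of prime characteristic p, let I ≠ R be a non-zero ideal of R, let a, b ∈ R, let S = {r + iθ : r ∈ R, i ∈ I} ⊆ R[t]/(t² + at + b) be the subalgebra realizing R(I)_{a,b}, with maximal ideal 𝔫 = {m + iθ : m ∈ 𝔪, i ∈ I}. Then for every q = p^e with e ∈ ℕ, the ideal 𝔫^{[q]} of S generated by the q-th powers of the elements of 𝔫 equals the set {r + jθ : r ∈ 𝔪^{[q]}, j ∈ 𝔪^{[q]}I + B_q I^{[q]}}, where B_q = Σ_{u,v ∈ ℕ, u+2v = q−1} C(u+v,u) (−a)^u (−b)^v ∈ R. -/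
/-!
In characteristic `p` the Frobenius is additive, so `(m + iθ)^q = m^q + i^q θ^q`, and
`θ^q = c + U_q θ` where `U` is the Lucas sequence of the relation `θ² = -aθ - b`; its binomial
expansion is exactly the sum defining `B_q`. Hence the `q`-th powers of elements of `𝔫` lie in
`{r + jθ : r ∈ 𝔪^{[q]}, j ∈ 𝔪^{[q]}I + B_q I^{[q]}}`, which is an ideal of `S`. Conversely,
`𝔪^{[q]} ⊆ 𝔫^{[q]}`, `𝔪^{[q]} · Iθ ⊆ 𝔫^{[q]}`, and `B_q i^q θ = (iθ)^q - c i^q ∈ 𝔫^{[q]}`.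
-/

open Polynomial Finset

/-- The `q`-th bracket power `J^{[q]}` of an ideal: the ideal generated by the `q`-th
powers of the elements of `J`. -/
noncomputable def bracketPow {A : Type*} [CommSemiring A] (J : Ideal A) (q : ℕ) : Ideal A :=
  Ideal.span ((fun x => x ^ q) '' (J : Set A))

/-- The element `B_q = ∑_{u,v ∈ ℕ, u+2v = q-1} C(u+v,u) (-a)ᵘ (-b)ᵛ` of `R`; the condition
`u + 2v = q - 1` is encoded as `u + 2v + 1 = q`, and all such pairs lie in
`range (q+1) ×ˢ range (q+1)`. -/
noncomputable def Bq {R : Type*} [CommRing R] (a b : R) (q : ℕ) : R :=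
  ∑ uv ∈ (range (q + 1) ×ˢ range (q + 1)).filter (fun uv => uv.1 + 2 * uv.2 + 1 = q),
    ((uv.1 + uv.2).choose uv.1 : R) * (-a) ^ uv.1 * (-b) ^ uv.2

section

variable {R : Type*} [CommRing R]

def lucasU (P Q : R) : ℕ → R
  | 0 => 0
  | 1 => 1
  | n + 2 => P * lucasU P Q (n + 1) - Q * lucasU P Q n

lemma choose_succ_succ_mul_pow (P Q : R) (i j : ℕ) :
    ((i + 1).choose (j + 1) : R) * P ^ (i + 1 - (j + 1)) * (-Q) ^ (j + 1) =
      P * ((i.choose (j + 1) : R) * P ^ (i - (j + 1)) * (-Q) ^ (j + 1)) -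
        Q * ((i.choose j : R) * P ^ (i - j) * (-Q) ^ j) := by
  rw [Nat.choose_succ_succ', Nat.add_sub_add_right, Nat.cast_add]
  rcases le_or_gt i j with hij | hij
  · rw [Nat.choose_eq_zero_of_lt (Nat.lt_succ_of_le hij)]
    ring
  · rw [show i - j = i - (j + 1) + 1 by omega]
    ring

theorem lucasU_succ_eq_sum_choose (P Q : R) (n : ℕ) :
    lucasU P Q (n + 1) =
      ∑ ij ∈ antidiagonal n, (ij.1.choose ij.2 : R) * P ^ (ij.1 - ij.2) * (-Q) ^ ij.2 := by
  induction n using Nat.twoStepInduction with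
  | zero => simp [lucasU]
  | one => simp [lucasU, Nat.antidiagonal_succ']
  | more n h₀ h₁ =>
    rw [lucasU, h₁, h₀, Nat.antidiagonal_succ_succ', Nat.antidiagonal_succ']
    simp only [Finset.sum_cons, Finset.sum_map, Function.Embedding.coe_prodMap, Prod.map_fst,
      Prod.map_snd, Function.Embedding.coeFn_mk, Function.Embedding.refl_apply, Nat.succ_eq_add_one,
      choose_succ_succ_mul_pow, sum_sub_distrib, ← mul_sum, Nat.choose_zero_right,
      Nat.choose_zero_succ, Nat.cast_zero, Nat.cast_one, zero_mul, zero_add, one_mul, tsub_zero,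
      pow_zero, mul_one]
    ring

theorem Bq_eq_lucasU (a b : R) (q : ℕ) : Bq a b q = lucasU (-a) b q := by
  rcases q with _ | n
  · simp [Bq, lucasU]
  rw [lucasU_succ_eq_sum_choose, Bq]
  refine sum_bij_ne_zero (fun uv _ _ => (uv.1 + uv.2, uv.2)) ?_ ?_ ?_ ?_
  · intro uv h _
    simp only [mem_filter] at h
    simp only [Finset.HasAntidiagonal.mem_antidiagonal]
    omega
  · intro uv _ _ uv' _ _ h
    simp only [Prod.mk.injEq] at h
    ext <;> omega
  · rintro ⟨i, j⟩ h hne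
    have hji : j ≤ i := by
      by_contra hlt
      exact hne (by simp [Nat.choose_eq_zero_of_lt (not_le.1 hlt)])
    simp only [Finset.HasAntidiagonal.mem_antidiagonal] at h
    refine ⟨(i - j, j), ?_, ?_, ?_⟩
    · simp only [mem_filter, mem_product, mem_range]; omega
    · simpa [Nat.sub_add_cancel hji, Nat.choose_symm hji] using hne
    · simp only [Nat.sub_add_cancel hji]
  · rintro ⟨u, v⟩ _ _
    dsimp only
    rw [Nat.choose_symm_add, add_tsub_cancel_right]

section QuadraticAlgebra

variable {A : Type*} [CommRing A] [Algebra R A]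

/-- `{r + jθ : r ∈ J₀, j ∈ J₁}`; the ring `S`, its maximal ideal and its bracket powers are all
of this form. -/
def pairSubmodule (θ : A) (J₀ J₁ : Ideal R) : Submodule R A :=
  Submodule.map (Algebra.linearMap R A) J₀ ⊔ Submodule.map (LinearMap.toSpanSingleton R A θ) J₁

lemma mem_pairSubmodule {θ x : A} {J₀ J₁ : Ideal R} :
    x ∈ pairSubmodule θ J₀ J₁ ↔
      ∃ r ∈ J₀, ∃ j ∈ J₁, x = algebraMap R A r + algebraMap R A j * θ := by
  simp only [pairSubmodule, Submodule.mem_sup, Submodule.mem_map, Algebra.linearMap_apply,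
    LinearMap.toSpanSingleton_apply, Algebra.smul_def]
  constructor
  · rintro ⟨_, ⟨r, hr, rfl⟩, _, ⟨j, hj, rfl⟩, rfl⟩
    exact ⟨r, hr, j, hj, rfl⟩
  · rintro ⟨r, hr, j, hj, rfl⟩
    exact ⟨_, ⟨r, hr, rfl⟩, _, ⟨j, hj, rfl⟩, rfl⟩

lemma coe_pairSubmodule (θ : A) (J₀ J₁ : Ideal R) :
    (pairSubmodule θ J₀ J₁ : Set A) =
      {x | ∃ r ∈ J₀, ∃ j ∈ J₁, x = algebraMap R A r + algebraMap R A j * θ} :=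
  Set.ext fun _ => mem_pairSubmodule

variable {a b : R} {θ : A}

lemma pow_succ_eq_lucasU (hθ : θ ^ 2 + algebraMap R A a * θ + algebraMap R A b = 0) (n : ℕ) :
    θ ^ (n + 1) = algebraMap R A (-b * lucasU (-a) b n)
      + algebraMap R A (lucasU (-a) b (n + 1)) * θ := by
  induction n with
  | zero => simp [lucasU]
  | succ n ih =>
    rw [pow_succ, ih, lucasU]
    simp only [map_mul, map_sub, map_neg]
    linear_combination algebraMap R A (lucasU (-a) b (n + 1)) * hθ

lemma mul_mem_pairSubmodule (hθ : θ ^ 2 + algebraMap R A a * θ + algebraMap R A b = 0)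
    {I J₀ J₁ : Ideal R} (h₁₀ : J₁ ≤ J₀) (h₀₁ : J₀ * I ≤ J₁) {x y : A}
    (hx : x ∈ pairSubmodule θ ⊤ I) (hy : y ∈ pairSubmodule θ J₀ J₁) :
    x * y ∈ pairSubmodule θ J₀ J₁ := by
  obtain ⟨r', -, i', hi', rfl⟩ := mem_pairSubmodule.1 hx
  obtain ⟨r, hr, j, hj, rfl⟩ := mem_pairSubmodule.1 hy
  refine mem_pairSubmodule.2
    ⟨r' * r - b * (i' * j), ?_, r' * j + i' * r - a * (i' * j), ?_, ?_⟩
  · exact J₀.sub_mem (J₀.mul_mem_left _ hr) (J₀.mul_mem_left _ (h₁₀ (J₁.mul_mem_left _ hj)))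
  · have hri : i' * r ∈ J₁ := h₀₁ (mul_comm r i' ▸ Ideal.mul_mem_mul hr hi')
    exact J₁.sub_mem (J₁.add_mem (J₁.mul_mem_left _ hj) hri)
      (J₁.mul_mem_left _ (J₁.mul_mem_left _ hj))
  · simp only [map_sub, map_add, map_mul]
    linear_combination algebraMap R A i' * algebraMap R A j * hθ

variable (R) in
lemma add_pow_char_pow_of_algebra {p : ℕ} (hp : p.Prime) [CharP R p] (x y : A) (e : ℕ) :
    (x + y) ^ p ^ e = x ^ p ^ e + y ^ p ^ e := by
  rcases subsingleton_or_nontrivial A with _ | _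
  · exact Subsingleton.elim _ _
  have := Fact.mk hp
  have : CharP A p := (CharP.charP_iff_prime_eq_zero hp).2 <| by
    rw [← map_natCast (algebraMap R A), CharP.cast_eq_zero, map_zero]
  exact add_pow_char_pow x y p e

lemma exists_add_mul_pow_char_pow (hθ : θ ^ 2 + algebraMap R A a * θ + algebraMap R A b = 0)
    {p : ℕ} (hp : p.Prime) [CharP R p] (e : ℕ) :
    ∃ c : R, ∀ m i : R, (algebraMap R A m + algebraMap R A i * θ) ^ p ^ e =
      algebraMap R A (m ^ p ^ e + c * i ^ p ^ e)
        + algebraMap R A (lucasU (-a) b (p ^ e) * i ^ p ^ e) * θ := by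
  obtain ⟨n, hn⟩ : ∃ n, p ^ e = n + 1 := Nat.exists_eq_add_one.2 (pow_pos hp.pos e)
  refine ⟨-b * lucasU (-a) b n, fun m i => ?_⟩
  rw [add_pow_char_pow_of_algebra R hp, mul_pow, hn, pow_succ_eq_lucasU hθ]
  simp only [map_add, map_mul, map_pow]
  ring

end QuadraticAlgebra

lemma bracketPow_le_comap {A B : Type*} [CommSemiring A] [CommSemiring B] (f : A →+* B)
    {J : Ideal A} {K : Ideal B} (h : J ≤ K.comap f) (q : ℕ) :
    bracketPow J q ≤ (bracketPow K q).comap f :=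
  Ideal.span_le.2 <| by
    rintro _ ⟨x, hx, rfl⟩
    exact Ideal.subset_span ⟨f x, h hx, (map_pow f x q).symm⟩

section Subalgebra

variable {A : Type*} [CommRing A] [Algebra R A] {a b : R} {θ : A} {I J : Ideal R}
  {S : Subalgebra R A} {N : Ideal S} {p : ℕ} [CharP R p]

theorem image_bracketPow_subset (hθ : θ ^ 2 + algebraMap R A a * θ + algebraMap R A b = 0)
    (hp : p.Prime) (e : ℕ) (hIJ : I ≤ J) (hS : ∀ s : S, (s : A) ∈ pairSubmodule θ ⊤ I)
    (hN : Subtype.val '' (N : Set S) ⊆ pairSubmodule θ J I) :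
    Subtype.val '' (bracketPow N (p ^ e) : Set S) ⊆
      pairSubmodule θ (bracketPow J (p ^ e))
        (bracketPow J (p ^ e) * I + Ideal.span {lucasU (-a) b (p ^ e)} * bracketPow I (p ^ e)) := by
  obtain ⟨c, hc⟩ := exists_add_mul_pow_char_pow hθ hp e
  have hJq : ∀ x ∈ J, x ^ p ^ e ∈ bracketPow J (p ^ e) := fun x hx =>
    Ideal.subset_span ⟨x, hx, rfl⟩
  have hIq : bracketPow I (p ^ e) ≤ bracketPow J (p ^ e) := Ideal.span_mono (Set.image_mono hIJ)
  rintro _ ⟨s, hs, rfl⟩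
  induction hs using Submodule.span_induction with
  | mem _ hx =>
    obtain ⟨n, hn, rfl⟩ := hx
    obtain ⟨m, hm, i, hi, hni⟩ := mem_pairSubmodule.1 (hN ⟨n, hn, rfl⟩)
    rw [SubmonoidClass.coe_pow, hni, hc]
    refine mem_pairSubmodule.2 ⟨_, add_mem (hJq m hm) (Ideal.mul_mem_left _ _ (hJq i (hIJ hi))),
      _, Ideal.mem_sup_right (Ideal.mul_mem_mul (Ideal.mem_span_singleton_self _)
        (Ideal.subset_span ⟨i, hi, rfl⟩)), rfl⟩
  | zero => exact zero_mem _
  | add x y _ _ hx hy => exact add_mem hx hy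
  | smul t x _ hx =>
    rw [smul_eq_mul, Subalgebra.coe_mul]
    refine mul_mem_pairSubmodule hθ ?_ ?_ (hS t) hx <;> rw [Submodule.add_eq_sup]
    exacts [sup_le Ideal.mul_le_left (Ideal.mul_le_right.trans hIq), le_sup_left]

theorem pairSubmodule_subset_image_bracketPow
    (hθ : θ ^ 2 + algebraMap R A a * θ + algebraMap R A b = 0) (hp : p.Prime) (e : ℕ)
    (hIJ : I ≤ J) (hN : (pairSubmodule θ J I : Set A) ⊆ Subtype.val '' (N : Set S)) :
    (pairSubmodule θ (bracketPow J (p ^ e))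
        (bracketPow J (p ^ e) * I + Ideal.span {lucasU (-a) b (p ^ e)} * bracketPow I (p ^ e))
        : Set A) ⊆ Subtype.val '' (bracketPow N (p ^ e) : Set S) := by
  obtain ⟨c, hc⟩ := exists_add_mul_pow_char_pow hθ hp e
  let V : Submodule R A := ((bracketPow N (p ^ e)).restrictScalars R).map S.val.toLinearMap
  have hV : ∀ x ∈ bracketPow N (p ^ e), (x : A) ∈ V := fun x hx => ⟨x, hx, rfl⟩
  have hmem : ∀ m ∈ J, ∀ i ∈ I, ∃ t ∈ N, (t : A) = algebraMap R A m + algebraMap R A i * θ :=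
    fun m hm i hi => hN (mem_pairSubmodule.2 ⟨m, hm, i, hi, rfl⟩)
  have hθI : ∀ i ∈ I, ∃ t ∈ N, (t : A) = algebraMap R A i * θ := fun i hi => by
    simpa using hmem 0 (zero_mem _) i hi
  have hM : bracketPow J (p ^ e) ≤ (bracketPow N (p ^ e)).comap (algebraMap R S) := by
    refine bracketPow_le_comap _ (fun m hm => ?_) _
    obtain ⟨n, hn, hnm⟩ := hmem m hm 0 (zero_mem _)
    rwa [Ideal.mem_comap, show algebraMap R S m = n from Subtype.ext (by simpa using hnm.symm)]
  let W : Ideal R := V.comap (LinearMap.toSpanSingleton R A θ)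
  have hMI : bracketPow J (p ^ e) * I ≤ W := Ideal.mul_le.2 fun r hr i hi => by
    obtain ⟨t, ht, hti⟩ := hθI i hi
    simpa [W, Algebra.smul_def, hti, mul_assoc] using hV _ (Ideal.mul_mem_right t _ (hM hr))
  have hBI : Ideal.span {lucasU (-a) b (p ^ e)} * bracketPow I (p ^ e) ≤ W := by
    rw [bracketPow, Ideal.span_mul_span', Ideal.span_le]
    rintro _ ⟨_, rfl, _, ⟨i, hi, rfl⟩, rfl⟩
    obtain ⟨t, ht, hti⟩ := hθI i hi
    have hcq := hV _ (hM (Ideal.mul_mem_left _ c (Ideal.subset_span ⟨i, hIJ hi, rfl⟩)))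
    have htq := hV _ (Ideal.subset_span ⟨t, ht, rfl⟩ : t ^ p ^ e ∈ bracketPow N (p ^ e))
    have hfrob : (algebraMap R A i * θ) ^ p ^ e = algebraMap R A (c * i ^ p ^ e)
        + algebraMap R A (lucasU (-a) b (p ^ e) * i ^ p ^ e) * θ := by
      simpa [zero_pow (pow_ne_zero e hp.ne_zero)] using hc 0 i
    change (lucasU (-a) b (p ^ e) * i ^ p ^ e) • θ ∈ V
    rw [Algebra.smul_def, eq_sub_of_add_eq' hfrob.symm]
    exact V.sub_mem (by simpa [hti] using htq) (by simpa using hcq)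
  rintro _ hx
  obtain ⟨r, hr, j, hj, rfl⟩ := mem_pairSubmodule.1 hx
  obtain ⟨s, hs, hsx⟩ : algebraMap R A r + algebraMap R A j * θ ∈ V := by
    refine V.add_mem (hV _ (hM hr)) ?_
    rw [Submodule.add_eq_sup] at hj
    simpa [W, Algebra.smul_def] using (sup_le hMI hBI) hj
  exact ⟨s, hs, hsx⟩

theorem image_bracketPow_eq_pairSubmodule
    (hθ : θ ^ 2 + algebraMap R A a * θ + algebraMap R A b = 0) (hp : p.Prime) (e : ℕ)
    (hIJ : I ≤ J) (hS : ∀ s : S, (s : A) ∈ pairSubmodule θ ⊤ I)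
    (hN : Subtype.val '' (N : Set S) = pairSubmodule θ J I) :
    Subtype.val '' (bracketPow N (p ^ e) : Set S) =
      pairSubmodule θ (bracketPow J (p ^ e))
        (bracketPow J (p ^ e) * I + Ideal.span {lucasU (-a) b (p ^ e)} * bracketPow I (p ^ e)) :=
  (image_bracketPow_subset hθ hp e hIJ hS hN.subset).antisymm
    (pairSubmodule_subset_image_bracketPow hθ hp e hIJ hN.superset)

end Subalgebra

end

theorem bracket_power_of_maximal_ideal_general {R : Type*} [CommRing R]
    [IsLocalRing R] (p : ℕ) (hp : p.Prime) [CharP R p]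
    (I : Ideal R) (hI : I ≠ ⊤) (a b : R)
    (S : Subalgebra R (AdjoinRoot (X ^ 2 + C a * X + C b)))
    (hS : (S : Set (AdjoinRoot (X ^ 2 + C a * X + C b)))
      = {x | ∃ r : R, ∃ i ∈ I,
          x = algebraMap R (AdjoinRoot (X ^ 2 + C a * X + C b)) r
            + algebraMap R (AdjoinRoot (X ^ 2 + C a * X + C b)) i
              * AdjoinRoot.root (X ^ 2 + C a * X + C b)})
    (N : Ideal ↥S)
    (hN : Subtype.val '' (N : Set ↥S)
      = {x | ∃ m ∈ IsLocalRing.maximalIdeal R, ∃ i ∈ I,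
          x = algebraMap R (AdjoinRoot (X ^ 2 + C a * X + C b)) m
            + algebraMap R (AdjoinRoot (X ^ 2 + C a * X + C b)) i
              * AdjoinRoot.root (X ^ 2 + C a * X + C b)})
    (e : ℕ) (q : ℕ) (hq : q = p ^ e) :
    Subtype.val '' (bracketPow N q : Set ↥S)
      = {x | ∃ r ∈ bracketPow (IsLocalRing.maximalIdeal R) q,
          ∃ j ∈ bracketPow (IsLocalRing.maximalIdeal R) q * I
              + Ideal.span {Bq a b q} * bracketPow I q,
          x = algebraMap R (AdjoinRoot (X ^ 2 + C a * X + C b)) r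
            + algebraMap R (AdjoinRoot (X ^ 2 + C a * X + C b)) j
              * AdjoinRoot.root (X ^ 2 + C a * X + C b)} := by
  have hθ : AdjoinRoot.root (X ^ 2 + C a * X + C b) ^ 2
      + algebraMap R _ a * AdjoinRoot.root (X ^ 2 + C a * X + C b) + algebraMap R _ b = 0 := by
    have h := AdjoinRoot.eval₂_root (X ^ 2 + C a * X + C b)
    simp only [eval₂_add, eval₂_mul, eval₂_pow, eval₂_X, eval₂_C] at h
    rwa [AdjoinRoot.algebraMap_eq]
  have hS' (s : S) : s.1 ∈ pairSubmodule (AdjoinRoot.root _) ⊤ I := by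
    have hs : s.1 ∈ (S : Set _) := s.2
    rw [hS] at hs
    obtain ⟨r, i, hi, hs⟩ := hs
    exact mem_pairSubmodule.2 ⟨r, trivial, i, hi, hs⟩
  rw [← coe_pairSubmodule] at hN
  rw [hq, Bq_eq_lucasU, ← coe_pairSubmodule]
  exact image_bracketPow_eq_pairSubmodule hθ hp e (IsLocalRing.le_maximalIdeal hI) hS' hN

/-- Let `(R, 𝔪)` be a noetherian local ring of prime characteristic `p`,
`I ≠ R` a non-zero ideal, `a b ∈ R`, and let `S = {r + iθ : r ∈ R, i ∈ I}` be the
subalgebra of `R[t]/(t² + a t + b)` realizing `R(I)_{a,b}`, with maximal ideal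
`𝔫 = {m + iθ : m ∈ 𝔪, i ∈ I}`. Then for `q = p ^ e`, the ideal `𝔫^{[q]}` of `S`, viewed
as a subset of the ambient ring, equals `{r + jθ : r ∈ 𝔪^{[q]}, j ∈ 𝔪^{[q]}I + B_q I^{[q]}}`. -/
theorem bracket_power_of_maximal_ideal {R : Type*} [CommRing R] [IsNoetherianRing R]
    [IsLocalRing R] (p : ℕ) (hp : p.Prime) [CharP R p]
    (I : Ideal R) (hI : I ≠ ⊤) (hI0 : I ≠ ⊥) (a b : R)
    (S : Subalgebra R (AdjoinRoot (X ^ 2 + C a * X + C b)))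
    (hS : (S : Set (AdjoinRoot (X ^ 2 + C a * X + C b)))
      = {x | ∃ r : R, ∃ i ∈ I,
          x = algebraMap R (AdjoinRoot (X ^ 2 + C a * X + C b)) r
            + algebraMap R (AdjoinRoot (X ^ 2 + C a * X + C b)) i
              * AdjoinRoot.root (X ^ 2 + C a * X + C b)})
    (N : Ideal ↥S)
    (hN : Subtype.val '' (N : Set ↥S)
      = {x | ∃ m ∈ IsLocalRing.maximalIdeal R, ∃ i ∈ I,
          x = algebraMap R (AdjoinRoot (X ^ 2 + C a * X + C b)) m
            + algebraMap R (AdjoinRoot (X ^ 2 + C a * X + C b)) i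
              * AdjoinRoot.root (X ^ 2 + C a * X + C b)})
    (e : ℕ) (q : ℕ) (hq : q = p ^ e) :
    Subtype.val '' (bracketPow N q : Set ↥S)
      = {x | ∃ r ∈ bracketPow (IsLocalRing.maximalIdeal R) q,
          ∃ j ∈ bracketPow (IsLocalRing.maximalIdeal R) q * I
              + Ideal.span {Bq a b q} * bracketPow I q,
          x = algebraMap R (AdjoinRoot (X ^ 2 + C a * X + C b)) r
            + algebraMap R (AdjoinRoot (X ^ 2 + C a * X + C b)) j
              * AdjoinRoot.root (X ^ 2 + C a * X + C b)} :=
  bracket_power_of_maximal_ideal_general p hp I hI a b S hS N hN e q hq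
end

section
/- Let p be a prime number with p ≠ 5. Then for every e ∈ ℕ, the Fibonacci number F_{p^e} is not divisible by p. -/
/-!
Let `x` be a root of `x ^ 2 = x + 1` in a commutative ring of characteristic `p`; then so is
`1 - x`, and every root `y` satisfies `y ^ (n + 1) = F_{n+1} y + F_n`. If `p ∣ F_q` with `q = p ^ e`,
both `x ^ q` and `(1 - x) ^ q` equal `c = F_{q-1}`. The Frobenius gives `(1 - x) ^ q = 1 - x ^ q`,
so `2 c = 1`, while `c ^ 2 = (x (1 - x)) ^ q = (-1) ^ q`. Hence `4 (-1) ^ q = 1`, i.e. `p ∣ 5` when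
`q` is odd and `p ∣ 3` when `q` is even, which forces `p = 2` and is absurd.
-/

open Polynomial

theorem pow_succ_eq_fib_mul_add_fib {R : Type*} [CommSemiring R] {x : R} (hx : x ^ 2 = x + 1)
    (n : ℕ) : x ^ (n + 1) = Nat.fib (n + 1) * x + Nat.fib n := by
  induction n with
  | zero => simp
  | succ n ih =>
    calc x ^ (n + 2) = Nat.fib (n + 1) * x ^ 2 + Nat.fib n * x := by rw [pow_succ, ih]; ring
      _ = Nat.fib (n + 2) * x + Nat.fib (n + 1) := by rw [hx, Nat.fib_add_two]; push_cast; ring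

theorem four_mul_neg_one_pow_eq_one_of_fib_eq_zero {R : Type*} [CommRing R] (p : ℕ) [ExpChar R p]
    {x : R} (hx : x ^ 2 = x + 1) (e : ℕ) (hfib : (Nat.fib (p ^ e) : R) = 0) :
    4 * (-1) ^ (p ^ e) = (1 : R) := by
  obtain ⟨m, hm⟩ : ∃ m, p ^ e = m + 1 :=
    Nat.exists_eq_add_one.mpr (pow_pos (expChar_pos R p) e)
  have hy : (1 - x) ^ 2 = (1 - x) + 1 := by linear_combination hx
  set c : R := (Nat.fib m : R)
  have hxc : x ^ (p ^ e) = c := by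
    rw [hm, pow_succ_eq_fib_mul_add_fib hx, ← hm, hfib, zero_mul, zero_add]
  have hyc : (1 - x) ^ (p ^ e) = c := by
    rw [hm, pow_succ_eq_fib_mul_add_fib hy, ← hm, hfib, zero_mul, zero_add]
  have htwo : 2 * c = 1 := by
    have := sub_pow_expChar_pow (1 : R) x (p := p) (n := e)
    rw [one_pow, hxc, hyc] at this
    linear_combination this
  have hprod : c ^ 2 = (-1) ^ (p ^ e) :=
    calc c ^ 2 = (x * (1 - x)) ^ (p ^ e) := by rw [mul_pow, hxc, hyc, sq]
      _ = (-1) ^ (p ^ e) := by congr 1; linear_combination -hx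
  linear_combination (2 * c + 1) * htwo - 4 * hprod

theorem exists_charP_sq_eq_add_one (p : ℕ) [Fact p.Prime] :
    ∃ (R : Type) (_ : CommRing R) (_ : CharP R p) (x : R), x ^ 2 = x + 1 := by
  let f : (ZMod p)[X] := X ^ 2 - X - 1
  have : Nontrivial (AdjoinRoot f) := AdjoinRoot.nontrivial f (by
    have : f.degree = 2 := by unfold f; compute_degree!
    simp [this])
  refine ⟨AdjoinRoot f, inferInstance, charP_of_injective_algebraMap' (ZMod p) p,
    AdjoinRoot.root f, ?_⟩
  have := AdjoinRoot.eval₂_root f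
  simp only [f, eval₂_sub, eval₂_X_pow, eval₂_X, eval₂_one] at this
  linear_combination this

/-- Let `p` be a prime number with `p ≠ 5`. Then for every `e ∈ ℕ`, the
Fibonacci number `F_{p^e}` is not divisible by `p`. -/
theorem prime_not_dvd_fib_pow (p : ℕ) (hp : p.Prime) (hp5 : p ≠ 5) (e : ℕ) :
    ¬ p ∣ Nat.fib (p ^ e) := by
  have := Fact.mk hp
  intro hdvd
  obtain ⟨R, _, _, x, hx⟩ := exists_charP_sq_eq_add_one p
  have h4 := four_mul_neg_one_pow_eq_one_of_fib_eq_zero p hx e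
    ((CharP.cast_eq_zero_iff R p _).mpr hdvd)
  have hdvd_int : (p : ℤ) ∣ 4 * (-1) ^ (p ^ e) - 1 :=
    (CharP.intCast_eq_zero_iff R p _).mp (by push_cast; rw [h4, sub_self])
  rcases Nat.even_or_odd (p ^ e) with heven | hodd
  · have hp2 : p = 2 := (Nat.Prime.even_iff hp).mp (Nat.even_pow.mp heven).1
    rw [heven.neg_one_pow, hp2] at hdvd_int
    norm_num at hdvd_int
  · rw [hodd.neg_one_pow] at hdvd_int
    have h5 : p ∣ 5 := by norm_num at hdvd_int; exact_mod_cast hdvd_int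
    exact hp5 ((Nat.prime_dvd_prime_iff_eq hp Nat.prime_five).mp h5)
end

section
/- Let k = ℤ/3ℤ and work in the polynomial ring k[x,y]. For every q = 3^e with integer e ≥ 1, the polynomial (x² − y²)^q = x^{2q} − y^{2q} does not belong to the ideal of k[x,y] generated by x^q(x² − y²) and y^q(x² − y²); equivalently, the polynomial Σ_{j=0}^{q−1} x^{2j} y^{2(q−1−j)} does not belong to the ideal (x^q, y^q). -/
/-!
By Frobenius, `(x² - y²)^q = x^{2q} - y^{2q} = S · (x² - y²)` with `S` the geometric sum
`∑_{j<q} x^{2j} y^{2(q-1-j)}`; cancelling the nonzero factor `x² - y²` reduces the first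
non-membership to `S ∉ (x^q, y^q)`. As `q` is odd, `S` contains the monomial `x^{q-1} y^{q-1}`
with coefficient `1`, and this monomial is divisible by neither `x^q` nor `y^q`.
-/

open MvPolynomial Finset

namespace Ideal

theorem mul_mem_span_pair_mul_iff {R : Type*} [CommSemiring R] [IsDomain R] {f : R} (hf : f ≠ 0)
    {p a b : R} : p * f ∈ span {a * f, b * f} ↔ p ∈ span {a, b} := by
  have hfactor : ∀ u v : R, u * (a * f) + v * (b * f) = (u * a + v * b) * f := fun u v => by ring
  simp only [mem_span_pair, hfactor, mul_left_inj' hf]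

end Ideal

namespace MvPolynomial

variable {σ R : Type*}

theorem X_pow_sub_X_pow_ne_zero [CommRing R] [Nontrivial R] {i j : σ} (hij : i ≠ j) {n : ℕ}
    (hn : n ≠ 0) : (X i ^ n - X j ^ n : MvPolynomial σ R) ≠ 0 := by
  classical
  intro h
  simpa [hij, hn] using congrArg (eval (Pi.single i 1)) h

variable [CommSemiring R]

theorem notMem_span_X_pow_pair {p : MvPolynomial σ R} {i j : σ} {n : ℕ} {d : σ →₀ ℕ}
    (hd : d ∈ p.support) (hi : d i < n) (hj : d j < n) :
    p ∉ Ideal.span {X i ^ n, X j ^ n} := by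
  have hspan : ({X i ^ n, X j ^ n} : Set (MvPolynomial σ R)) =
      (fun s => monomial s 1) '' {Finsupp.single i n, Finsupp.single j n} := by
    simp only [Set.image_pair, X_pow_eq_monomial]
  rw [hspan, mem_ideal_span_monomial_image]
  push Not
  refine ⟨d, hd, ?_⟩
  rintro s (rfl | rfl) hle
  · exact absurd (hle i) (by simpa using hi)
  · exact absurd (hle j) (by simpa using hj)

theorem coeff_sum_X_pow_two_mul_X_pow_two_mul {i j : σ} (hij : i ≠ j) {q : ℕ} (hq : Odd q) :
    coeff (Finsupp.single i (q - 1) + Finsupp.single j (q - 1))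
      (∑ k ∈ range q, (X i : MvPolynomial σ R) ^ (2 * k) * X j ^ (2 * (q - 1 - k))) = 1 := by
  classical
  obtain ⟨m, rfl⟩ := hq
  have hexp : ∀ k, Finsupp.single i (2 * k) + Finsupp.single j (2 * (2 * m + 1 - 1 - k)) =
      Finsupp.single i (2 * m + 1 - 1) + Finsupp.single j (2 * m + 1 - 1) ↔ k = m := by
    intro k
    constructor
    · intro h
      simpa [hij] using DFunLike.congr_fun h i
    · rintro rfl
      congr 2; omega
  have hterm : ∀ k, coeff (Finsupp.single i (2 * m + 1 - 1) + Finsupp.single j (2 * m + 1 - 1))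
      ((X i : MvPolynomial σ R) ^ (2 * k) * X j ^ (2 * (2 * m + 1 - 1 - k))) =
        if k = m then 1 else 0 := fun k => by
    rw [X_pow_eq_monomial, X_pow_eq_monomial, monomial_mul, one_mul, coeff_monomial]
    exact if_congr (hexp k) rfl rfl
  rw [coeff_sum, sum_congr rfl fun k _ => hterm k, sum_ite_eq', if_pos (mem_range.2 (by omega))]

theorem sum_X_pow_two_mul_X_pow_two_mul_notMem_span [Nontrivial R] {i j : σ} (hij : i ≠ j)
    {q : ℕ} (hq : Odd q) :
    (∑ k ∈ range q, (X i : MvPolynomial σ R) ^ (2 * k) * X j ^ (2 * (q - 1 - k)))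
      ∉ Ideal.span {X i ^ q, X j ^ q} := by
  have hq0 : q ≠ 0 := hq.pos.ne'
  refine notMem_span_X_pow_pair (d := Finsupp.single i (q - 1) + Finsupp.single j (q - 1))
    ?_ (by simp [hij]; omega) (by simp [hij.symm]; omega)
  rw [mem_support_iff, coeff_sum_X_pow_two_mul_X_pow_two_mul hij hq]
  exact one_ne_zero

end MvPolynomial

theorem pow_not_mem_bracketPow_mul_general {e : ℕ} (q : ℕ) (hq : q = 3 ^ e) :
    ((X 0 ^ 2 - X 1 ^ 2 : MvPolynomial (Fin 2) (ZMod 3)) ^ q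
        = X 0 ^ (2 * q) - X 1 ^ (2 * q))
      ∧ (X 0 ^ 2 - X 1 ^ 2 : MvPolynomial (Fin 2) (ZMod 3)) ^ q
          ∉ Ideal.span ({X 0 ^ q * (X 0 ^ 2 - X 1 ^ 2), X 1 ^ q * (X 0 ^ 2 - X 1 ^ 2)} :
              Set (MvPolynomial (Fin 2) (ZMod 3)))
      ∧ (∑ j ∈ range q, (X 0 : MvPolynomial (Fin 2) (ZMod 3)) ^ (2 * j)
            * X 1 ^ (2 * (q - 1 - j)))
          ∉ Ideal.span ({X 0 ^ q, X 1 ^ q} : Set (MvPolynomial (Fin 2) (ZMod 3))) := by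
  have : Fact (Nat.Prime 3) := ⟨Nat.prime_three⟩
  have hfrob : (X 0 ^ 2 - X 1 ^ 2 : MvPolynomial (Fin 2) (ZMod 3)) ^ q
      = X 0 ^ (2 * q) - X 1 ^ (2 * q) := by
    rw [hq, sub_pow_char_pow, ← pow_mul, ← pow_mul]
  have hgeom : (∑ j ∈ range q, (X 0 : MvPolynomial (Fin 2) (ZMod 3)) ^ (2 * j)
      * X 1 ^ (2 * (q - 1 - j))) * (X 0 ^ 2 - X 1 ^ 2) = X 0 ^ (2 * q) - X 1 ^ (2 * q) := by
    have h := geom_sum₂_mul (X 0 ^ 2 : MvPolynomial (Fin 2) (ZMod 3)) (X 1 ^ 2) q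
    simp only [← pow_mul] at h
    exact h
  have hodd : Odd q := hq ▸ Odd.pow ⟨1, rfl⟩
  have hsum := sum_X_pow_two_mul_X_pow_two_mul_notMem_span (R := ZMod 3) (i := (0 : Fin 2))
    (j := 1) (by decide) hodd
  refine ⟨hfrob, fun hmem => hsum ?_, hsum⟩
  have hne := X_pow_sub_X_pow_ne_zero (R := ZMod 3) (i := (0 : Fin 2)) (j := 1) (by decide)
    two_ne_zero
  rwa [hfrob, ← hgeom, Ideal.mul_mem_span_pair_mul_iff hne] at hmem

/-- In `k[x,y]` with `k = ℤ/3ℤ` (here `x = X 0`, `y = X 1`), for every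
`q = 3^e` with `e ≥ 1`: `(x² − y²)^q = x^{2q} − y^{2q}`, this polynomial does not belong
to the ideal generated by `x^q(x² − y²)` and `y^q(x² − y²)` (the ideal `𝔪^{[q]}·I` for
`𝔪 = (x,y)`, `I = (x² − y²)`); equivalently, `∑_{j=0}^{q−1} x^{2j} y^{2(q−1−j)}` does not
belong to the ideal `(x^q, y^q)`. -/
theorem pow_not_mem_bracketPow_mul {e : ℕ} (he : 1 ≤ e) (q : ℕ) (hq : q = 3 ^ e) :
    ((X 0 ^ 2 - X 1 ^ 2 : MvPolynomial (Fin 2) (ZMod 3)) ^ q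
        = X 0 ^ (2 * q) - X 1 ^ (2 * q))
      ∧ (X 0 ^ 2 - X 1 ^ 2 : MvPolynomial (Fin 2) (ZMod 3)) ^ q
          ∉ Ideal.span ({X 0 ^ q * (X 0 ^ 2 - X 1 ^ 2), X 1 ^ q * (X 0 ^ 2 - X 1 ^ 2)} :
              Set (MvPolynomial (Fin 2) (ZMod 3)))
      ∧ (∑ j ∈ range q, (X 0 : MvPolynomial (Fin 2) (ZMod 3)) ^ (2 * j)
            * X 1 ^ (2 * (q - 1 - j)))
          ∉ Ideal.span ({X 0 ^ q, X 1 ^ q} : Set (MvPolynomial (Fin 2) (ZMod 3))) :=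
  pow_not_mem_bracketPow_mul_general q hq
end

section
/- Let k be a field of prime characteristic p with p ≡ 2 (mod 3), let R = k[x,y]/(x³ + y³), and let 𝔪 = (x,y) be the image of the irrelevant maximal ideal in R. Then for every q = p^e with e ∈ ℕ, one has ℓ_R(R/𝔪^{[q]}) = 3q − 2. -/
set_option synthInstance.maxHeartbeats 1000000
set_option maxHeartbeats 1000000

open MvPolynomial

/-- The length of an `R`-module `M`: the Krull dimension of the lattice `Submodule R M`. -/
noncomputable def moduleLength (R M : Type*) [Ring R] [AddCommGroup M] [Module R M] : ℕ∞ :=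
  WithBot.unbotD 0 (Order.krullDim (Submodule R M))

/-- The ring `R = k[x,y]/(x³ + y³)`, with `x = X 0` and `y = X 1`. -/
abbrev CubicQuot (K : Type*) [Field K] : Type _ :=
  MvPolynomial (Fin 2) K ⧸
    (Ideal.span {X 0 ^ 3 + X 1 ^ 3} : Ideal (MvPolynomial (Fin 2) K))

/-!
As `q` is a power of the characteristic, `𝔪^[q] = (x^q, y^q)`, so
`R/𝔪^[q] ≅ A = k[x,y]/(x³ + y³, x^q, y^q)`. In `A` the relation `x³ = -y³` rewrites every
monomial `x^a y^b` as `±x^(a % 3) y^(b + 3⌊a/3⌋)`, and writing `q = 3t + r` with `r ∈ {1, 2}`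
(as `3 ∤ q`) it gives `x^q = ±x^r y^(3t)`. Hence the monomials `x^i y^j` with `i < 3`, `j < q`,
outside the corner `i ≥ r, j ≥ 3t` form a `k`-basis of `A`: there are `3q - r(3 - r) = 3q - 2`
of them. Since `x` and `y` are nilpotent in `A`, it is a local `k`-algebra with residue field
`k`, so its length equals its `k`-dimension.
-/

open Module

theorem moduleLength_eq_length (R M : Type*) [Ring R] [AddCommGroup M] [Module R M] :
    moduleLength R M = Module.length R M := by
  rw [moduleLength, ← Module.coe_length, WithBot.unbotD_coe]

theorem bracketPow_span {A : Type*} [CommRing A] (p : ℕ) [ExpChar A p] (e : ℕ) (s : Set A) :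
    bracketPow (Ideal.span s) (p ^ e) = Ideal.span ((· ^ p ^ e) '' s) := by
  apply le_antisymm
  · rw [bracketPow, Ideal.span_le]
    rintro _ ⟨w, hw, rfl⟩
    have := Ideal.mem_map_of_mem (iterateFrobenius A p e) hw
    rwa [Ideal.map_span] at this
  · exact Ideal.span_mono (Set.image_mono Ideal.subset_span)

section
variable {K B : Type*} [Field K] [CommRing B] [Algebra K B]

theorem IsLocalRing.of_isNilpotent_sub_algebraMap [Nontrivial B]
    (h : ∀ b : B, ∃ c : K, IsNilpotent (b - algebraMap K B c)) : IsLocalRing B := by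
  refine .of_isUnit_or_isUnit_one_sub_self fun b ↦ ?_
  obtain ⟨c, hc⟩ := h b
  rcases eq_or_ne c 0 with rfl | hc0
  · right
    simpa using hc.isUnit_one_sub
  · left
    simpa using hc.isUnit_add_left_of_commute ((IsUnit.mk0 c hc0).map (algebraMap K B))
      (Commute.all _ _)

theorem Module.length_eq_finrank_of_isNilpotent_sub_algebraMap (M : Type*) [AddCommGroup M]
    [Module B M] [Module K M] [IsScalarTower K B M] [Module.Finite K M]
    (h : ∀ b : B, ∃ c : K, IsNilpotent (b - algebraMap K B c)) :
    Module.length B M = Module.finrank K M := by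
  cases subsingleton_or_nontrivial B
  · have := Module.subsingleton B M
    simp [Module.finrank_zero_of_subsingleton]
  have := IsLocalRing.of_isNilpotent_sub_algebraMap h
  have hsurj : Function.Surjective (algebraMap K (IsLocalRing.ResidueField B)) := by
    intro x
    obtain ⟨b, rfl⟩ := IsLocalRing.residue_surjective x
    obtain ⟨c, hc⟩ := h b
    refine ⟨c, ?_⟩
    rw [IsScalarTower.algebraMap_apply K B, IsLocalRing.ResidueField.algebraMap_eq, eq_comm,
      ← sub_eq_zero, ← map_sub, IsLocalRing.residue_eq_zero_iff]
    exact (IsLocalRing.mem_maximalIdeal _).2 hc.not_isUnit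
  have hκ : Module.length (IsLocalRing.ResidueField K) (IsLocalRing.ResidueField B) = 1 := by
    rw [← Module.length_eq_of_surjective (S := K) IsLocalRing.residue_surjective,
      ← (LinearEquiv.ofBijective (Algebra.linearMap K _)
      ⟨(algebraMap K _).injective, hsurj⟩).length_eq]
    exact Module.length_eq_one K K
  have := IsLocalRing.length_restrictScalars K B M
  rwa [hκ, mul_one, Module.length_eq_finrank, eq_comm] at this

theorem MvPolynomial.exists_isNilpotent_sub_algebraMap {σ R : Type*} [CommSemiring R]
    [Algebra R B] (f : MvPolynomial σ R →ₐ[R] B) (hf : Function.Surjective f)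
    (hX : ∀ i, IsNilpotent (f (X i))) (b : B) :
    ∃ c : R, IsNilpotent (b - algebraMap R B c) := by
  obtain ⟨p, rfl⟩ := hf b
  refine ⟨constantCoeff p, ?_⟩
  induction p using MvPolynomial.induction_on with
  | C a => simp
  | add p p' hp hp' =>
    rw [map_add, map_add, map_add, add_sub_add_comm]
    exact (Commute.all _ _).isNilpotent_add hp hp'
  | mul_X p i _ => simpa using (Commute.all _ _).isNilpotent_mul_left (hX i)

end

theorem MvPolynomial.monomial_one_fin_two {R : Type*} [CommSemiring R] (d : Fin 2 →₀ ℕ) :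
    monomial d (1 : R) = X 0 ^ d 0 * X 1 ^ d 1 := by
  rw [monomial_eq, C_1, one_mul, Finsupp.prod_fintype _ _ (by simp), Fin.prod_univ_two]

theorem MvPolynomial.apply_eq_zero_of_mem_span {σ R V : Type*} [CommSemiring R] [AddCommMonoid V]
    [Module R V] (φ : MvPolynomial σ R →ₗ[R] V) {s : Set (MvPolynomial σ R)}
    (h : ∀ d, ∀ g ∈ s, φ (monomial d 1 * g) = 0) {z : MvPolynomial σ R}
    (hz : z ∈ Ideal.span s) : φ z = 0 := by
  suffices ∀ a, φ (a * z) = 0 by simpa using this 1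
  induction hz using Submodule.span_induction with
  | mem g hg =>
    intro a
    induction a using MvPolynomial.induction_on' with
    | monomial d c =>
      rw [show monomial d c = c • monomial d (1 : R) by rw [smul_monomial, smul_eq_mul, mul_one],
        smul_mul_assoc, map_smul, h d g hg, smul_zero]
    | add a a' ha ha' => rw [add_mul, map_add, ha, ha', add_zero]
  | zero => simp
  | add x y _ _ hx hy => intro a; rw [mul_add, map_add, hx, hy, add_zero]
  | smul b x _ hx => intro a; rw [smul_eq_mul, ← mul_assoc]; exact hx _

noncomputable section

open Finset

variable (K : Type*) [Field K] (q : ℕ)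

def cubicBasisIndex : Finset (ℕ × ℕ) :=
  (range 3 ×ˢ range q) \ (Ico (q % 3) 3 ×ˢ Ico (3 * (q / 3)) q)

variable {q} in
theorem mem_cubicBasisIndex {i j : ℕ} :
    (i, j) ∈ cubicBasisIndex q ↔ i < 3 ∧ j < q ∧ ¬(q % 3 ≤ i ∧ 3 * (q / 3) ≤ j) := by
  simp only [cubicBasisIndex, mem_sdiff, mem_product, mem_range, mem_Ico]
  omega

theorem card_cubicBasisIndex (hq : ¬ 3 ∣ q) : #(cubicBasisIndex q) = 3 * q - 2 := by
  rw [cubicBasisIndex, card_sdiff_of_subset (product_subset_product (by grind) (by grind)),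
    card_product, card_product, card_range, card_range, Nat.card_Ico, Nat.card_Ico]
  have : q % 3 = 1 ∨ q % 3 = 2 := by omega
  rcases this with h | h <;> rw [h] <;> omega

def cubicIdeal : Ideal (MvPolynomial (Fin 2) K) :=
  Ideal.span {X 0 ^ 3 + X 1 ^ 3, X 0 ^ q, X 1 ^ q}

-- The coordinates of `x^a y^b` in `A` with respect to the basis indexed by `cubicBasisIndex q`.
def cubicNormalForm (a b : ℕ) : ℕ × ℕ →₀ K :=
  if (a % 3, b + 3 * (a / 3)) ∈ cubicBasisIndex q then
    (-1) ^ (a / 3) • Finsupp.single (a % 3, b + 3 * (a / 3)) 1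
  else 0

theorem cubicNormalForm_add_three_left (a b : ℕ) :
    cubicNormalForm K q (a + 3) b = -cubicNormalForm K q a (b + 3) := by
  have h₁ : (a + 3) / 3 = a / 3 + 1 := by omega
  have h₂ : (a + 3) % 3 = a % 3 := by omega
  have h₃ : b + 3 * (a / 3 + 1) = b + 3 + 3 * (a / 3) := by ring
  simp only [cubicNormalForm, h₁, h₂, h₃]
  split_ifs <;> simp [pow_succ]

theorem cubicNormalForm_add_left (a b : ℕ) : cubicNormalForm K q (a + q) b = 0 := by
  rw [cubicNormalForm, if_neg (by rw [mem_cubicBasisIndex]; omega)]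

theorem cubicNormalForm_add_right (a b : ℕ) : cubicNormalForm K q a (b + q) = 0 := by
  rw [cubicNormalForm, if_neg (by rw [mem_cubicBasisIndex]; omega)]

variable {q} in
theorem cubicNormalForm_of_mem {i j : ℕ} (h : (i, j) ∈ cubicBasisIndex q) :
    cubicNormalForm K q i j = Finsupp.single (i, j) 1 := by
  have hi : i < 3 := (mem_cubicBasisIndex.1 h).1
  simp [cubicNormalForm, Nat.mod_eq_of_lt hi, Nat.div_eq_of_lt hi, h]

def cubicNormalFormMap : MvPolynomial (Fin 2) K →ₗ[K] ℕ × ℕ →₀ K :=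
  (basisMonomials (Fin 2) K).constr K fun d ↦ cubicNormalForm K q (d 0) (d 1)

theorem cubicNormalFormMap_X_pow_mul_X_pow (a b : ℕ) :
    cubicNormalFormMap K q (X 0 ^ a * X 1 ^ b) = cubicNormalForm K q a b := by
  have h := (basisMonomials (Fin 2) K).constr_basis K
    (fun d ↦ cubicNormalForm K q (d 0) (d 1)) (Finsupp.single 0 a + Finsupp.single 1 b)
  simp only [coe_basisMonomials, monomial_one_fin_two] at h
  simpa [cubicNormalFormMap] using h

theorem cubicNormalFormMap_eq_zero_of_mem {z : MvPolynomial (Fin 2) K} (hz : z ∈ cubicIdeal K q) :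
    cubicNormalFormMap K q z = 0 := by
  refine apply_eq_zero_of_mem_span _ (fun d g hg ↦ ?_) hz
  rw [monomial_one_fin_two]
  rcases hg with rfl | rfl | rfl
  · rw [show X 0 ^ d 0 * X 1 ^ d 1 * (X 0 ^ 3 + X 1 ^ 3 : MvPolynomial (Fin 2) K) =
      X 0 ^ (d 0 + 3) * X 1 ^ d 1 + X 0 ^ d 0 * X 1 ^ (d 1 + 3) by ring, map_add,
      cubicNormalFormMap_X_pow_mul_X_pow, cubicNormalFormMap_X_pow_mul_X_pow,
      cubicNormalForm_add_three_left, neg_add_cancel]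
  · rw [show X 0 ^ d 0 * X 1 ^ d 1 * (X 0 ^ q : MvPolynomial (Fin 2) K) =
      X 0 ^ (d 0 + q) * X 1 ^ d 1 by ring, cubicNormalFormMap_X_pow_mul_X_pow,
      cubicNormalForm_add_left]
  · rw [show X 0 ^ d 0 * X 1 ^ d 1 * (X 1 ^ q : MvPolynomial (Fin 2) K) =
      X 0 ^ d 0 * X 1 ^ (d 1 + q) by ring, cubicNormalFormMap_X_pow_mul_X_pow,
      cubicNormalForm_add_right]

def cubicMonomial (b : cubicBasisIndex q) : MvPolynomial (Fin 2) K ⧸ cubicIdeal K q :=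
  Ideal.Quotient.mk _ (X 0 ^ b.1.1 * X 1 ^ b.1.2)

theorem linearIndependent_cubicMonomial : LinearIndependent K (cubicMonomial K q) := by
  let ψ := ((cubicIdeal K q).restrictScalars K).liftQ (cubicNormalFormMap K q)
      (fun _ ↦ cubicNormalFormMap_eq_zero_of_mem K q) ∘ₗ
    (Submodule.Quotient.restrictScalarsEquiv K (cubicIdeal K q)).symm.toLinearMap
  have hψ : ψ ∘ cubicMonomial K q = fun b ↦ Finsupp.single b.1 1 := by
    funext ⟨⟨i, j⟩, hb⟩
    exact (cubicNormalFormMap_X_pow_mul_X_pow K q i j).trans (cubicNormalForm_of_mem K hb)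
  refine .of_comp ψ ?_
  rw [hψ]
  exact Finsupp.basisSingleOne.linearIndependent.comp _ Subtype.val_injective

theorem X_pow_mul_X_pow_mem_cubicIdeal :
    X 0 ^ (q % 3) * X 1 ^ (3 * (q / 3)) ∈ cubicIdeal K q := by
  rw [← Ideal.Quotient.eq_zero_iff_mem]
  set x := Ideal.Quotient.mk (cubicIdeal K q) (X 0)
  set y := Ideal.Quotient.mk (cubicIdeal K q) (X 1)
  have hx3 : x ^ 3 = -y ^ 3 := by
    rw [eq_neg_iff_add_eq_zero, ← map_pow, ← map_pow, ← map_add,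
      Ideal.Quotient.eq_zero_iff_mem]
    exact Ideal.subset_span (by simp)
  have hxq : x ^ q = 0 := by
    rw [← map_pow, Ideal.Quotient.eq_zero_iff_mem]
    exact Ideal.subset_span (by simp)
  have : x ^ q = (-1) ^ (q / 3) * (x ^ (q % 3) * y ^ (3 * (q / 3))) := by
    calc x ^ q = x ^ (q % 3) * (x ^ 3) ^ (q / 3) := by
          rw [← pow_mul, ← pow_add, Nat.mod_add_div]
      _ = _ := by rw [hx3]; ring
  rw [map_mul, map_pow, map_pow]
  simpa [hxq] using this.symm

theorem mk_X_pow_mul_X_pow_mem_span (i j : ℕ) :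
    Ideal.Quotient.mk (cubicIdeal K q) (X 0 ^ i * X 1 ^ j) ∈
      Submodule.span K (Set.range (cubicMonomial K q)) := by
  induction i using Nat.strong_induction_on generalizing j with | _ i ih =>
  by_cases hb : (i, j) ∈ cubicBasisIndex q
  · exact Submodule.subset_span ⟨⟨(i, j), hb⟩, rfl⟩
  by_cases hi : 3 ≤ i
  · obtain ⟨i, rfl⟩ := Nat.exists_eq_add_of_le' hi
    have hrel : X 0 ^ (i + 3) * X 1 ^ j + X 0 ^ i * X 1 ^ (j + 3) ∈ cubicIdeal K q := by
      rw [show X 0 ^ (i + 3) * X 1 ^ j + X 0 ^ i * X 1 ^ (j + 3) =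
        X 0 ^ i * X 1 ^ j * (X 0 ^ 3 + X 1 ^ 3 : MvPolynomial (Fin 2) K) by ring]
      exact Ideal.mul_mem_left _ _ (Ideal.subset_span (by simp))
    have hsum : Ideal.Quotient.mk (cubicIdeal K q) (X 0 ^ (i + 3) * X 1 ^ j) +
        Ideal.Quotient.mk _ (X 0 ^ i * X 1 ^ (j + 3)) = 0 := by
      rwa [← map_add, Ideal.Quotient.eq_zero_iff_mem]
    rw [eq_neg_of_add_eq_zero_left hsum]
    exact neg_mem (ih i (by omega) (j + 3))
  suffices X 0 ^ i * X 1 ^ j ∈ cubicIdeal K q by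
    rw [Ideal.Quotient.eq_zero_iff_mem.2 this]
    exact zero_mem _
  rw [mem_cubicBasisIndex] at hb
  by_cases hj : q ≤ j
  · exact Ideal.mem_of_dvd _ ((pow_dvd_pow (X 1) hj).mul_left _) (Ideal.subset_span (by simp))
  · exact Ideal.mem_of_dvd _ (mul_dvd_mul (pow_dvd_pow (X 0) (by omega))
      (pow_dvd_pow (X 1) (by omega))) (X_pow_mul_X_pow_mem_cubicIdeal K q)

theorem span_cubicMonomial : ⊤ ≤ Submodule.span K (Set.range (cubicMonomial K q)) := by
  rintro z -
  obtain ⟨p, rfl⟩ := Ideal.Quotient.mk_surjective z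
  induction p using MvPolynomial.induction_on' with
  | monomial d c =>
    rw [show monomial d c = c • monomial d (1 : K) by rw [smul_monomial, smul_eq_mul, mul_one],
      monomial_one_fin_two]
    exact Submodule.smul_mem _ c (mk_X_pow_mul_X_pow_mem_span K q _ _)
  | add p p' hp hp' => rw [map_add]; exact add_mem hp hp'

def cubicBasis : Basis (cubicBasisIndex q) K (MvPolynomial (Fin 2) K ⧸ cubicIdeal K q) :=
  .mk (linearIndependent_cubicMonomial K q) (span_cubicMonomial K q)

instance : Module.Finite K (MvPolynomial (Fin 2) K ⧸ cubicIdeal K q) :=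
  .of_basis (cubicBasis K q)

theorem finrank_quotient_cubicIdeal (hq : ¬ 3 ∣ q) :
    finrank K (MvPolynomial (Fin 2) K ⧸ cubicIdeal K q) = 3 * q - 2 := by
  rw [finrank_eq_card_basis (cubicBasis K q), Fintype.card_coe, card_cubicBasisIndex q hq]

def cubicQuotEquiv :
    (CubicQuot K ⧸ (Ideal.span {Ideal.Quotient.mk _ (X 0) ^ q, Ideal.Quotient.mk _ (X 1) ^ q} :
      Ideal (CubicQuot K))) ≃ₐ[K] MvPolynomial (Fin 2) K ⧸ cubicIdeal K q :=
  (Ideal.quotientEquivAlgOfEq K (by simp [Ideal.map_span, Set.image_pair])).trans <|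
    (DoubleQuot.quotQuotEquivQuotSupₐ K _ (Ideal.span {X 0 ^ q, X 1 ^ q})).trans <|
      Ideal.quotientEquivAlgOfEq K <| by
        rw [cubicIdeal, ← Ideal.span_union, Set.singleton_union, Set.insert_def]

end

/-- Let `k` be a field of prime characteristic `p ≡ 2 (mod 3)`, let
`R = k[x,y]/(x³ + y³)` and let `𝔪 = (x, y)` be the image of the irrelevant maximal ideal.
Then for every `q = p^e`, `ℓ_R(R/𝔪^{[q]}) = 3q − 2`. -/
theorem length_cubic_quot (K : Type*) [Field K] (p : ℕ) (hp : p.Prime) [CharP K p]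
    (hp3 : p % 3 = 2) (e : ℕ) (q : ℕ) (hq : q = p ^ e) :
    moduleLength (CubicQuot K)
        (CubicQuot K ⧸ bracketPow
          (Ideal.span {Ideal.Quotient.mk _ (X 0), Ideal.Quotient.mk _ (X 1)} :
            Ideal (CubicQuot K)) q)
      = ((3 * q - 2 : ℕ) : ℕ∞) := by
  have hq3 : ¬ 3 ∣ q := fun h ↦ by
    have := (Nat.prime_dvd_prime_iff_eq Nat.prime_three hp).1
      (Nat.prime_three.dvd_of_dvd_pow (hq ▸ h))
    omega
  have : Fact p.Prime := ⟨hp⟩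
  have : Nontrivial (CubicQuot K) := by
    rw [Ideal.Quotient.nontrivial_iff, Ne, Ideal.span_singleton_eq_top]
    exact fun h ↦ by simpa using h.map constantCoeff
  have : CharP (CubicQuot K) p := charP_of_injective_algebraMap (algebraMap K _).injective p
  rw [moduleLength_eq_length, hq, bracketPow_span, Set.image_pair, ← hq]
  set J : Ideal (CubicQuot K) :=
    Ideal.span {Ideal.Quotient.mk _ (X 0) ^ q, Ideal.Quotient.mk _ (X 1) ^ q}
  let φ : (CubicQuot K ⧸ J) ≃ₐ[K] _ := cubicQuotEquiv K q
  have : Module.Finite K (CubicQuot K ⧸ J) := .equiv φ.symm.toLinearEquiv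
  let f : MvPolynomial (Fin 2) K →ₐ[K] CubicQuot K ⧸ J :=
    (Ideal.Quotient.mkₐ K J).comp (Ideal.Quotient.mkₐ K _)
  have hX (i : Fin 2) : IsNilpotent (f (X i)) := by
    refine ⟨q, ?_⟩
    rw [← map_pow]
    fin_cases i <;> exact Ideal.Quotient.eq_zero_iff_mem.2 (Ideal.subset_span (by simp))
  rw [Module.length_eq_of_surjective (Ideal.Quotient.mk_surjective (I := J)),
    Module.length_eq_finrank_of_isNilpotent_sub_algebraMap (K := K) _
      (exists_isNilpotent_sub_algebraMap (B := CubicQuot K ⧸ J) f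
        ((Ideal.Quotient.mkₐ_surjective K _).comp (Ideal.Quotient.mkₐ_surjective K _)) hX),
    φ.toLinearEquiv.finrank_eq, finrank_quotient_cubicIdeal K q hq3]
end
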